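/- arXiv:1904.11601 — 4 statements merged into one kernel-verified Lean document; each statement's English description precedes it below -/
import Mathlib

section
/- Let G be a connected undirected graph with nonnegative edge weights, let S be a subset of vertices and T its complement, and let (s,t) be an edge with s in S and t in T of weight w. Then max( max_{t' in T} d(s,t'), max_{s' in S} d(s',t) ) >= D_{ST}/2 - w/2, where D_{ST} = max_{s' in S, t' in T} d(s',t') is the ST-diameter. -/
/-- Near-linear 2-approximation for Bichromatic Diameter:
`max(max_{t'∈T} d(s,t'), max_{s'∈S} d(s',t)) ≥ D_ST/2 - w/2`. -/
theorem stmt_0 {V : Type*} (d : V → V → ℝ)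
    (hnonneg : ∀ u v, 0 ≤ d u v)
    (hsymm : ∀ u v, d u v = d v u)
    (htri : ∀ u v w, d u w ≤ d u v + d v w)
    (S T : Finset V) (hS : S.Nonempty) (hT : T.Nonempty)
    (s t : V) (hs : s ∈ S) (ht : t ∈ T)
    (w : ℝ) (hw : d s t ≤ w) :
    (S.sup' hS fun s' => T.sup' hT fun t' => d s' t') / 2 - w / 2 ≤
      max (T.sup' hT fun t' => d s t') (S.sup' hS fun s' => d s' t) := by
  set M := max (T.sup' hT fun t' => d s t') (S.sup' hS fun s' => d s' t) with hM
  have hD : (S.sup' hS fun s' => T.sup' hT fun t' => d s' t') ≤ M + w + M := by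
    apply Finset.sup'_le
    intro s' hs'
    apply Finset.sup'_le
    intro t' ht'
    have h1 : d s' t' ≤ d s' t + d t s + d s t' := by
      calc d s' t' ≤ d s' s + d s t' := htri _ _ _
        _ ≤ (d s' t + d t s) + d s t' := by linarith [htri s' t s]
    have h2 : d s' t ≤ M := le_trans (Finset.le_sup' (fun x => d x t) hs') (le_max_right _ _)
    have h3 : d s t' ≤ M := le_trans (Finset.le_sup' (fun x => d s x) ht') (le_max_left _ _)
    have h4 : d t s ≤ w := by rw [hsymm]; exact hw
    linarith
  linarith
end

section
/- Let d be a metric on a vertex set V, let S, T be nonempty finite subsets of V, let t be any element of T, and let t' in T maximize d(t,t') over T. Then for every v in S, max( d(v,t), d(v,t') ) >= epsilon_{ST}(v) / 3, where epsilon_{ST}(v) = max_{u in T} d(v,u). -/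
/-- Near-linear 3-approximation for ST-Eccentricities:
for every `v ∈ S`, `max(d(v,t), d(v,t')) ≥ ε_ST(v)/3`. -/
theorem stmt_2 {V : Type*} (d : V → V → ℝ)
    (hnonneg : ∀ u v, 0 ≤ d u v)
    (hsymm : ∀ u v, d u v = d v u)
    (htri : ∀ u v w, d u w ≤ d u v + d v w)
    (S T : Finset V) (hS : S.Nonempty) (hT : T.Nonempty)
    (t : V) (ht : t ∈ T)
    (t' : V) (ht' : t' ∈ T) (hmax : ∀ u ∈ T, d t u ≤ d t t') :
    ∀ v ∈ S, (T.sup' hT fun u => d v u) / 3 ≤ max (d v t) (d v t') := by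
  intro v hv
  rw [div_le_iff₀ (by norm_num)]
  apply Finset.sup'_le
  intro u hu
  have h1 : d v u ≤ d v t + d t u := htri v t u
  have h2 : d t u ≤ d t t' := hmax u hu
  have h3 : d t t' ≤ d t v + d v t' := htri t v t'
  have h4 : d t v = d v t := hsymm t v
  have : d v u ≤ d v t + (d v t + d v t') := by linarith
  have hm1 : d v t ≤ max (d v t) (d v t') := le_max_left _ _
  have hm2 : d v t' ≤ max (d v t) (d v t') := le_max_right _ _
  linarith
end

section
/- Let U, V be finite sets of vectors in {0,1}^d and let G be the undirected bipartite-like 'OV-graph' on vertex set U ∪ V ∪ C where C = {1,...,d}, with an edge between x in U ∪ V and c in C if and only if x[c] = 1. Then for u in U and v in V: (1) if the inner product u·v is nonzero, then d_G(u,v) = 2; (2) if u·v = 0 (i.e., u and v are orthogonal), then d_G(u,v) >= 4. -/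
/-- The vertex set of the OV-graph: a vector-vertex is a tagged vector
(`false` for the `U` side, `true` for the `V` side), a coordinate-vertex
is an element of `Fin n`. -/
def OVVertex (n : ℕ) : Type := (Bool × (Fin n → Bool)) ⊕ Fin n

/-- The OV-graph on `U ∪ V ∪ C`: an edge between a vector-vertex `x`
(belonging to its side) and a coordinate-vertex `c` iff `x[c] = 1`. -/
def OVGraph (n : ℕ) (U V : Finset (Fin n → Bool)) : SimpleGraph (OVVertex n) where
  Adj a b :=
    match a, b with
    | Sum.inl (tag, x), Sum.inr c =>
        ((tag = false ∧ x ∈ U) ∨ (tag = true ∧ x ∈ V)) ∧ x c = true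
    | Sum.inr c, Sum.inl (tag, x) =>
        ((tag = false ∧ x ∈ U) ∨ (tag = true ∧ x ∈ V)) ∧ x c = true
    | _, _ => False
  symm := by
    constructor
    intro a b h
    match a, b with
    | Sum.inl (tag, x), Sum.inr c => exact h
    | Sum.inr c, Sum.inl (tag, x) => exact h
  loopless := by
    constructor
    intro a h
    match a with
    | Sum.inl (tag, x) => exact h
    | Sum.inr c => exact h

/-- In the OV-graph: if `u·v ≠ 0` then `d(u,v) = 2`; if `u·v = 0` then
`d(u,v) ≥ 4` (for the possibly infinite distance `edist`). -/
theorem stmt_6 (n : ℕ) (U V : Finset (Fin n → Bool))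
    (u v : Fin n → Bool) (hu : u ∈ U) (hv : v ∈ V)
    (hu1 : ∃ c, u c = true) (hv1 : ∃ c, v c = true) :
    ((∃ c, u c = true ∧ v c = true) →
      (OVGraph n U V).dist (Sum.inl (false, u)) (Sum.inl (true, v)) = 2) ∧
    ((∀ c, ¬(u c = true ∧ v c = true)) →
      4 ≤ (OVGraph n U V).edist (Sum.inl (false, u)) (Sum.inl (true, v))) := by
  set G := OVGraph n U V with hG
  have hne : (Sum.inl (false, u) : OVVertex n) ≠ Sum.inl (true, v) := by
    intro h
    have := congrArg (fun s => Sum.elim (fun p => p.1) (fun _ => true) s) h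
    simp at this
  have hnadj : ¬ G.Adj (Sum.inl (false, u)) (Sum.inl (true, v)) := by
    intro h; exact h
  constructor
  · rintro ⟨c, hc1, hc2⟩
    have h1 : G.Adj (Sum.inl (false, u)) (Sum.inr c) := ⟨Or.inl ⟨rfl, hu⟩, hc1⟩
    have h2 : G.Adj (Sum.inr c) (Sum.inl (true, v)) := ⟨Or.inr ⟨rfl, hv⟩, hc2⟩
    let p : G.Walk (Sum.inl (false, u)) (Sum.inl (true, v)) :=
      SimpleGraph.Walk.cons h1 (SimpleGraph.Walk.cons h2 SimpleGraph.Walk.nil)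
    have hle : G.dist (Sum.inl (false, u)) (Sum.inl (true, v)) ≤ 2 := by
      have := SimpleGraph.dist_le p
      exact this
    have hr : G.Reachable (Sum.inl (false, u)) (Sum.inl (true, v)) := ⟨p⟩
    have h0 : G.dist (Sum.inl (false, u)) (Sum.inl (true, v)) ≠ 0 :=
      fun h => hne (hr.dist_eq_zero_iff.mp h)
    have hone : G.dist (Sum.inl (false, u)) (Sum.inl (true, v)) ≠ 1 :=
      fun h => hnadj (SimpleGraph.dist_eq_one_iff_adj.mp h)
    omega
  · intro horth
    by_contra hlt
    push_neg at hlt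
    have hne_top : G.edist (Sum.inl (false, u)) (Sum.inl (true, v)) ≠ ⊤ := by
      intro h; rw [h] at hlt; exact (not_top_lt hlt)
    obtain ⟨p, hp⟩ := SimpleGraph.exists_walk_of_edist_ne_top hne_top
    have hlen : p.length ≤ 3 := by
      have : (p.length : ℕ∞) < 4 := hp ▸ hlt
      exact_mod_cast Order.lt_add_one_iff.mp (by exact_mod_cast this)
    -- case analysis on the walk
    cases p with
    | cons h1 q =>
      rename_i w1
      cases w1 with
      | inl y => exact h1
      | inr c =>
        obtain ⟨_, huc⟩ := h1
        cases q with
        | cons h2 r =>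
          rename_i w2
          cases w2 with
          | inr c' => exact h2
          | inl y =>
            obtain ⟨ty, x⟩ := y
            obtain ⟨_, hxc⟩ := h2
            cases r with
            | nil => exact horth c ⟨huc, hxc⟩
            | cons h3 s =>
              rename_i w3
              cases w3 with
              | inl z => exact h3
              | inr c'' =>
                cases s with
                | cons h4 t => have h5 : t.length + 4 ≤ 3 := hlen; omega
end

section
/- Let d be a metric on V, S and T nonempty finite subsets, R = min_{s in S} max_{t in T} d(s,t) the ST-radius with center s*. Let X be a finite subset of V, and suppose s0 in S minimizes max_{x in X} d(s0,x) over S, where X ⊆ T. If every t in T satisfies d(t, X) <= 2R/3, then max_{t in T} d(s0, t) <= 5R/3. -/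
/-- If every `t ∈ T` is within `2R/3` of the sample `X ⊆ T` and `s0`
minimizes the maximum distance to `X` over `S`, then `s0` is a `5R/3`
approximate ST-center. -/
theorem stmt_11 {V : Type*} (d : V → V → ℝ)
    (hnonneg : ∀ u v, 0 ≤ d u v)
    (hsymm : ∀ u v, d u v = d v u)
    (htri : ∀ u v w, d u w ≤ d u v + d v w)
    (S T : Finset V) (hS : S.Nonempty) (hT : T.Nonempty)
    (sstar : V) (hsstar : sstar ∈ S)
    (R : ℝ) (hR : R = T.sup' hT fun t => d sstar t)
    (hRmin : ∀ s ∈ S, R ≤ T.sup' hT fun t => d s t)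
    (X : Finset V) (hX : X.Nonempty) (hXT : X ⊆ T)
    (s0 : V) (hs0 : s0 ∈ S)
    (hmin : ∀ s ∈ S, (X.sup' hX fun x => d s0 x) ≤ X.sup' hX fun x => d s x)
    (hcover : ∀ t ∈ T, (X.inf' hX fun x => d t x) ≤ 2 * R / 3) :
    (T.sup' hT fun t => d s0 t) ≤ 5 * R / 3 := by
  have hXstar : (X.sup' hX fun x => d s0 x) ≤ R := by
    refine le_trans (hmin sstar hsstar) ?_
    rw [hR]
    exact Finset.sup'_le _ _ fun x hx => Finset.le_sup' _ (hXT hx)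
  refine Finset.sup'_le _ _ fun t ht => ?_
  obtain ⟨x, hx, hxmin⟩ := Finset.exists_mem_eq_inf' hX fun x => d t x
  have h1 : d t x ≤ 2 * R / 3 := hxmin ▸ hcover t ht
  have h2 : d s0 x ≤ R := le_trans (Finset.le_sup' _ hx) hXstar
  calc d s0 t ≤ d s0 x + d x t := htri _ _ _
    _ = d s0 x + d t x := by rw [hsymm x t]
    _ ≤ R + 2 * R / 3 := add_le_add h2 h1
    _ = 5 * R / 3 := by ring
end
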